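/- For |Σ| ≥ 2 and |A| ≥ 2, there do not exist positively expansive cellular automata on A^{Σ*}. -/

import Mathlib

open Function

variable {Sig A : Type*}

/-- Configurations over the tree `Sig*`: maps from the free monoid (lists) to `A`. -/
abbrev Config (Sig A : Type*) := List Sig → A

/-- Shift action: `(shift f v) w = f (v ++ w)`. -/
def shift (f : Config Sig A) (v : List Sig) : Config Sig A := fun w => f (v ++ w)

/-- `Delta Sig n` is the set of words of length `< n` (i.e. `Δ_n`). -/
def Delta (Sig : Type*) (n : ℕ) : Type _ := {w : List Sig // w.length < n}

/-- Restriction of a configuration to `Δ_n`. -/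
def restrict (f : Config Sig A) (n : ℕ) : Delta Sig n → A := fun w => f w.val

/-- The CA defined by a local map `μ` of radius `r`. -/
def caMap (r : ℕ) (μ : (Delta Sig (r + 1) → A) → A) : Config Sig A → Config Sig A :=
  fun f v => μ (restrict (shift f v) (r + 1))

/-- `τ` is a cellular automaton: it admits a radius `r ≥ 1` and a local defining map. -/
def IsCA (τ : Config Sig A → Config Sig A) : Prop :=
  ∃ r : ℕ, 1 ≤ r ∧ ∃ μ : (Delta Sig (r + 1) → A) → A,
    ∀ (f : Config Sig A) (v : List Sig), τ f v = μ (restrict (shift f v) (r + 1))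

/-- A subshift: a closed, shift-invariant set of configurations. -/
def IsSubshift [TopologicalSpace A] (X : Set (Config Sig A)) : Prop :=
  IsClosed X ∧ ∀ f ∈ X, ∀ v : List Sig, shift f v ∈ X

/-- The blocks of size `n` of `X`. -/
def blockSet (X : Set (Config Sig A)) (n : ℕ) : Set (Delta Sig n → A) :=
  {p | ∃ f ∈ X, restrict f n = p}

/-- Positive expansiveness with constant `N`. -/
def PosExpansive (τ : Config Sig A → Config Sig A) (N : ℕ) : Prop :=
  1 ≤ N ∧ ∀ f₁ f₂ : Config Sig A, f₁ ≠ f₂ →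
    ∃ t : ℕ, restrict (τ^[t] f₁) N ≠ restrict (τ^[t] f₂) N

/-- The set `P(τ, n, t)` of `t`-tuples of traces on `Δ_n`. -/
def Pset (τ : Config Sig A → Config Sig A) (n t : ℕ) : Set (Fin t → Delta Sig n → A) :=
  {s | ∃ f : Config Sig A, ∀ i : Fin t, s i = restrict (τ^[(i : ℕ)] f) n}

/-- The block `a ◁ p` on `Δ_{r+1}` with root value `a` and agreeing with `p` elsewhere. -/
def rootIns (r : ℕ) (a : A) (p : {w : List Sig // w.length < r + 1 ∧ w ≠ []} → A) :
    Delta Sig (r + 1) → A :=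
  fun w => if h : w.val.length = 0 then a else
    p ⟨w.val, ⟨w.2, fun he => h (by simp [he])⟩⟩

/-- Permutivity: for every pattern on `Δ_{r+1} \ {ε}`, the induced map on root values is
a permutation of `A`. -/
def Permutive (r : ℕ) (μ : (Delta Sig (r + 1) → A) → A) : Prop :=
  ∀ p : {w : List Sig // w.length < r + 1 ∧ w ≠ []} → A,
    Function.Bijective (fun a : A => μ (rootIns r a p))

/-- The image under the local map `μ` of a block of size `n + r`: a block of size `n`. -/
def blockImage (r n : ℕ) (μ : (Delta Sig (r + 1) → A) → A)
    (p : Delta Sig (n + r) → A) : Delta Sig n → A :=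
  fun v => μ (fun w => p ⟨v.val ++ w.val, by
    have hv := v.2; have hw := w.2
    simp only [List.length_append]; omega⟩)

/-- A diamond of `(r, μ)`: two distinct blocks of size `n = m + r > 2r + 2` coinciding
with a block `p ∈ A^{Δ_r}` on `Δ_r` and on `vΔ_r` for every `v` of length `m = n - r`,
with the same image under `μ`. -/
def HasDiamond (r : ℕ) (μ : (Delta Sig (r + 1) → A) → A) : Prop :=
  ∃ (m : ℕ) (_ : r + 2 < m) (p : Delta Sig r → A)
    (p₁ p₂ : Delta Sig (m + r) → A),
    p₁ ≠ p₂ ∧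
    (∀ w : Delta Sig r,
      p₁ ⟨w.val, by have := w.2; omega⟩ = p w ∧
      p₂ ⟨w.val, by have := w.2; omega⟩ = p w) ∧
    (∀ v : List Sig, ∀ hv : v.length = m, ∀ w : Delta Sig r,
      p₁ ⟨v ++ w.val, by have := w.2; simp only [List.length_append]; omega⟩ = p w ∧
      p₂ ⟨v ++ w.val, by have := w.2; simp only [List.length_append]; omega⟩ = p w) ∧
    blockImage r m μ p₁ = blockImage r m μ p₂

/-- Right-closingness of the CA `caMap r μ`. -/
def RightClosing (r : ℕ) (μ : (Delta Sig (r + 1) → A) → A) : Prop :=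
  ∃ N : ℕ, ∀ (p : Delta Sig r → A) (q : Delta Sig (r * N) → A),
    (∃ f : Config Sig A, restrict f r = p ∧ restrict (caMap r μ f) (r * N) = q) →
    ∃! ps : {v : List Sig // v.length = r} → Delta Sig r → A,
      ∀ f : Config Sig A, restrict f r = p → restrict (caMap r μ f) (r * N) = q →
        ∀ (v : {v : List Sig // v.length = r}) (w : Delta Sig r),
          f (v.val ++ w.val) = ps v w


/-!
Positive expansiveness and compactness give a time `T` such that the traces of `τ^[t] f` on
`Δ_N` for `t < T` determine `f` on `Δ_{N+1}`. Since `τ` commutes with the shifts, the same step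
applied at every node of depth `m` shows that the traces up to time `1 + m * T` determine `f` on
`Δ_{N+m}`. Counting, `|A| ^ |Δ_{N+m}| ≤ |A| ^ (|Δ_N| * (1 + m * T))`, so `|Δ_{N+m}|` grows at
most linearly in `m`; but it is at least `|Sig| ^ m ≥ 2 ^ m`.
-/

instance [Finite Sig] (n : ℕ) : Finite (Delta Sig n) :=
  (List.finite_length_lt Sig n).to_subtype

lemma shift_shift (f : Config Sig A) (v w : List Sig) :
    shift (shift f v) w = shift f (v ++ w) :=
  funext fun u => by simp only [shift, List.append_assoc]

lemma restrict_eq_iff {f g : Config Sig A} {n : ℕ} :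
    restrict f n = restrict g n ↔ ∀ w : List Sig, w.length < n → f w = g w :=
  ⟨fun h w hw => congrFun h ⟨w, hw⟩, fun h => funext fun w => h w.val w.2⟩

lemma restrict_surjective [Nonempty A] (n : ℕ) :
    Surjective (fun f : Config Sig A => restrict f n) := fun p =>
  ⟨fun w => if h : w.length < n then p ⟨w, h⟩ else Classical.arbitrary A,
    funext fun w => dif_pos w.2⟩

lemma continuous_restrict [TopologicalSpace A] (n : ℕ) :
    Continuous (fun f : Config Sig A => restrict f n) :=
  continuous_pi fun w => continuous_apply w.val

lemma pow_card_le_card_delta [Finite Sig] {k n : ℕ} (hk : k < n) :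
    Nat.card Sig ^ k ≤ Nat.card (Delta Sig n) := by
  have hinj : Injective fun x : Fin k → Sig =>
      (⟨List.ofFn x, by rw [List.length_ofFn]; exact hk⟩ : Delta Sig n) :=
    fun x y hxy => List.ofFn_injective (congrArg Subtype.val hxy)
  calc Nat.card Sig ^ k = Nat.card (Fin k → Sig) := by rw [Nat.card_fun, Nat.card_fin]
    _ ≤ Nat.card (Delta Sig n) := Nat.card_le_card_of_injective _ hinj

lemma exists_add_mul_lt_two_pow (a b : ℕ) : ∃ m, a + b * m < 2 ^ m := by
  set j := 2 * (a + b) + 1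
  refine ⟨j + j, ?_⟩
  calc a + b * (j + j) ≤ j * j := by simp only [j]; nlinarith
    _ < 2 ^ j * 2 ^ j := Nat.mul_self_lt_mul_self j.lt_two_pow_self
    _ = 2 ^ (j + j) := (pow_add 2 j j).symm

theorem exists_forall_lt_eq_imp_eq_of_separating {X D E : Type*} [TopologicalSpace X]
    [CompactSpace X] [TopologicalSpace D] [T2Space D] [TopologicalSpace E] [DiscreteTopology E]
    {g : ℕ → X → D} (hg : ∀ t, Continuous (g t))
    (hsep : ∀ x y, x ≠ y → ∃ t, g t x ≠ g t y)
    {φ : X → E} (hφ : Continuous φ) :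
    ∃ T, ∀ x y, (∀ t < T, g t x = g t y) → φ x = φ y := by
  let U : ℕ → Set (X × X) := fun T => ⋃ t < T, {p | g t p.1 ≠ g t p.2}
  have hU_open : ∀ T, IsOpen (U T) := fun T =>
    isOpen_biUnion fun t _ =>
      isOpen_ne_fun ((hg t).comp continuous_fst) ((hg t).comp continuous_snd)
  have hU_mono : Monotone U := fun T T' hTT' =>
    Set.biUnion_subset_biUnion_left fun t (ht : t < T) => lt_of_lt_of_le ht hTT'
  have hcover : {p : X × X | φ p.1 ≠ φ p.2} ⊆ ⋃ T, U T := fun p hp => by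
    obtain ⟨t, ht⟩ := hsep p.1 p.2 fun h => hp (congrArg φ h)
    exact Set.mem_iUnion.2 ⟨t + 1, Set.mem_biUnion (Nat.lt_succ_self t) ht⟩
  have hcompact : IsCompact {p : X × X | φ p.1 ≠ φ p.2} :=
    ((isClosed_discrete {q : E × E | q.1 ≠ q.2}).preimage
      (f := fun p : X × X => (φ p.1, φ p.2)) (by fun_prop)).isCompact
  obtain ⟨T, hT⟩ := hcompact.elim_directed_cover U hU_open hcover hU_mono.directed_le
  refine ⟨T, fun x y hxy => by_contra fun hne => ?_⟩
  obtain ⟨t, ht, hne_t⟩ := Set.mem_iUnion₂.1 (hT (show (x, y) ∈ _ from hne))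
  exact hne_t (hxy t ht)

section CellularAutomaton

variable {τ : Config Sig A → Config Sig A}

lemma IsCA.iterate_shift (hτ : IsCA τ) (t : ℕ) (f : Config Sig A) (v : List Sig) :
    τ^[t] (shift f v) = shift (τ^[t] f) v := by
  obtain ⟨r, -, μ, hμ⟩ := hτ
  have hcomm : Function.Commute τ (shift · v) := fun f => funext fun w => by
    simp only [hμ, shift, shift_shift]
  exact (hcomm.iterate_left t) f

lemma IsCA.continuous [Finite Sig] [TopologicalSpace A] [DiscreteTopology A] (hτ : IsCA τ) :
    Continuous τ := by
  obtain ⟨r, -, μ, hμ⟩ := hτ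
  obtain rfl : τ = fun f v => μ (restrict (shift f v) (r + 1)) := funext fun f => funext (hμ f)
  exact continuous_pi fun v =>
    continuous_of_discreteTopology.comp (continuous_pi fun w => continuous_apply (v ++ w.val))

def TracesDetermine (τ : Config Sig A → Config Sig A) (N L n : ℕ) : Prop :=
  ∀ f g : Config Sig A,
    (∀ t < L, restrict (τ^[t] f) N = restrict (τ^[t] g) N) → restrict f n = restrict g n

lemma PosExpansive.exists_tracesDetermine [Finite Sig] [Finite A] {N : ℕ} (hτ : IsCA τ)
    (hexp : PosExpansive τ N) (n : ℕ) : ∃ L, TracesDetermine τ N L n := by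
  let _ : TopologicalSpace A := ⊥
  have _ : DiscreteTopology A := ⟨rfl⟩
  exact exists_forall_lt_eq_imp_eq_of_separating
    (fun t => (continuous_restrict N).comp (hτ.continuous.iterate t)) hexp.2
    (continuous_restrict n)

lemma IsCA.tracesDetermine_add {N T : ℕ} (hτ : IsCA τ) (hT : TracesDetermine τ N T (N + 1)) :
    ∀ m, TracesDetermine τ N (1 + m * T) (N + m)
  | 0, f, g, h => h 0 (by omega)
  | m + 1, f, g, h => by
    refine restrict_eq_iff.2 fun w hw => ?_
    set v := w.take m
    have hfg_later : ∀ t < T, restrict (τ^[t] f) (N + m) = restrict (τ^[t] g) (N + m) :=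
      fun t ht => hτ.tracesDetermine_add hT m _ _ fun s hs => by
        simp only [← iterate_add_apply]
        exact h (s + t) (by nlinarith)
    -- the subtree below `v` evolves as the shifted configuration `shift f v`
    have hshift : restrict (shift f v) (N + 1) = restrict (shift g v) (N + 1) :=
      hT _ _ fun t ht => restrict_eq_iff.2 fun u hu => by
        rw [hτ.iterate_shift, hτ.iterate_shift]
        refine restrict_eq_iff.1 (hfg_later t ht) (v ++ u) ?_
        simp only [List.length_append, List.length_take, v]
        omega
    have := restrict_eq_iff.1 hshift (w.drop m) (by rw [List.length_drop]; omega)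
    rwa [shift, shift, List.take_append_drop] at this

lemma TracesDetermine.card_delta_le [Finite Sig] [Finite A] (hA : 1 < Nat.card A) {N L n : ℕ}
    (h : TracesDetermine τ N L n) : Nat.card (Delta Sig n) ≤ Nat.card (Delta Sig N) * L := by
  have : Nonempty A := (Nat.card_pos_iff.1 (by omega)).1
  have hsurj := restrict_surjective (Sig := Sig) (A := A) n
  have hinj : Injective fun (p : Delta Sig n → A) (t : Fin L) =>
      restrict (τ^[t] (surjInv hsurj p)) N := fun p q hpq => by
    rw [← surjInv_eq hsurj p, ← surjInv_eq hsurj q]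
    exact h _ _ fun t ht => congrFun hpq ⟨t, ht⟩
  have hcard := Nat.card_le_card_of_injective _ hinj
  rw [Nat.card_fun, Nat.card_fun, Nat.card_fun, Nat.card_fin, ← pow_mul] at hcard
  exact (Nat.pow_le_pow_iff_right hA).1 hcard

end CellularAutomaton

/-- for `|Sig| ≥ 2` (and `|A| ≥ 2`) there are no positively expansive CA
on the full tree shift. -/
theorem no_expansive_CA [Finite Sig] [Finite A]
    (hSig : 2 ≤ Nat.card Sig) (hA : 2 ≤ Nat.card A) :
    ¬ ∃ (τ : Config Sig A → Config Sig A) (N : ℕ), IsCA τ ∧ PosExpansive τ N := by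
  rintro ⟨τ, N, hτ, hexp⟩
  obtain ⟨T, hT⟩ := hexp.exists_tracesDetermine hτ (N + 1)
  set C := Nat.card (Delta Sig N)
  obtain ⟨m, hm⟩ := exists_add_mul_lt_two_pow C (C * T)
  have hupper : Nat.card (Delta Sig (N + m)) ≤ C * (1 + m * T) :=
    (hτ.tracesDetermine_add hT m).card_delta_le hA
  have hlower : 2 ^ m ≤ Nat.card (Delta Sig (N + m)) :=
    (Nat.pow_le_pow_left hSig m).trans (pow_card_le_card_delta (by have := hexp.1; omega))
  linarith
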